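/- arXiv:1904.12300 — 2 statements merged into one kernel-verified Lean document; each statement's English description precedes it below -/
import Mathlib

section
/- Fix b > 0 and define θ(Δ) = R·Δ·exp(-a - b·Δ/(1-Δ)) for Δ ∈ (0,1). The unique maximizer of θ on (0,1) is Δ* = 1/(1 + b/2 + √((b/2)·(2 + b/2))). Equivalently, with c = b/2, Δ* = 1/(1 + c + √(c(2+c))). -/
/-!
Writing `E = 1 + b/2 + √((b/2)(2 + b/2))`, one has `E + 1/E = 2 + b`, so `Δ* = 1/E` and `E` are the two
roots of `(1 - Δ)² - bΔ`, with `Δ* < 1 < E`. The derivative of `θ` is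
`R e^{-a - bΔ/(1-Δ)} ((1 - Δ)² - bΔ) / (1 - Δ)²`, hence positive on `(0, Δ*)` and negative on `(Δ*, 1)`.
-/

open Set Real

theorem lt_of_hasDerivAt_pos_of_neg {f f' : ℝ → ℝ} {l m u : ℝ} (hm : m ∈ Ioo l u)
    (hf : ∀ x ∈ Ioo l u, HasDerivAt f (f' x) x) (hpos : ∀ x ∈ Ioo l m, 0 < f' x)
    (hneg : ∀ x ∈ Ioo m u, f' x < 0) {x : ℝ} (hx : x ∈ Ioo l u) (hxm : x ≠ m) : f x < f m := by
  have hcont : ContinuousOn f (Ioo l u) := fun y hy => (hf y hy).continuousAt.continuousWithinAt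
  have hmono : StrictMonoOn f (Ioc l m) := by
    refine strictMonoOn_of_hasDerivWithinAt_pos (f' := f') (convex_Ioc l m)
      (hcont.mono (Ioc_subset_Ioo_right hm.2)) (fun y hy => ?_) (fun y hy => ?_) <;>
      rw [interior_Ioc] at hy
    · exact (hf y ⟨hy.1, hy.2.trans hm.2⟩).hasDerivWithinAt
    · exact hpos y hy
  have hanti : StrictAntiOn f (Ico m u) := by
    refine strictAntiOn_of_hasDerivWithinAt_neg (f' := f') (convex_Ico m u)
      (hcont.mono (Ico_subset_Ioo_left hm.1)) (fun y hy => ?_) (fun y hy => ?_) <;>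
      rw [interior_Ico] at hy
    · exact (hf y ⟨hm.1.trans hy.1, hy.2⟩).hasDerivWithinAt
    · exact hneg y hy
  rcases hxm.lt_or_gt with h | h
  · exact hmono ⟨hx.1, h.le⟩ ⟨hm.1, le_rfl⟩ h
  · exact hanti ⟨le_rfl, hm.2⟩ ⟨h.le, hx.2⟩ h

theorem hasDerivAt_mul_exp_sub_mul_div_one_sub (R a b : ℝ) {x : ℝ} (hx : x ≠ 1) :
    HasDerivAt (fun y => R * y * exp (-a - b * y / (1 - y)))
      (R * exp (-a - b * x / (1 - x)) * ((1 - x) ^ 2 - b * x) / (1 - x) ^ 2) x := by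
  have hx' : 1 - x ≠ 0 := sub_ne_zero.mpr (Ne.symm hx)
  have hquot : HasDerivAt (fun y => b * y / (1 - y))
      ((b * 1 * (1 - x) - b * x * -1) / (1 - x) ^ 2) x :=
    ((hasDerivAt_id' x).const_mul b).div ((hasDerivAt_id' x).const_sub 1) hx'
  refine (((hasDerivAt_id' x).const_mul R).mul (hquot.const_sub (-a)).exp).congr_deriv ?_
  set e := exp (-a - b * x / (1 - x))
  field_simp
  ring

/-- The optimal duty cycle `Δ*` as a function of `b = 2λAₛCₛ`. -/
noncomputable def optimalDuty (b : ℝ) : ℝ := 1 / (1 + b / 2 + √((b / 2) * (2 + b / 2)))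

theorem one_lt_optimalDuty_inv {b : ℝ} (hb : 0 < b) : 1 < (optimalDuty b)⁻¹ := by
  rw [optimalDuty, one_div, inv_inv]
  linarith [sqrt_nonneg ((b / 2) * (2 + b / 2))]

theorem optimalDuty_mem_Ioo {b : ℝ} (hb : 0 < b) : optimalDuty b ∈ Ioo 0 1 := by
  have h := one_lt_optimalDuty_inv hb
  have hpos : 0 < optimalDuty b := inv_pos.mp (one_pos.trans h)
  exact ⟨hpos, by simpa using inv_lt_one_of_one_lt₀ h⟩

theorem one_sub_sq_sub_mul_eq {b : ℝ} (hb : 0 ≤ b) (x : ℝ) :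
    (1 - x) ^ 2 - b * x = (x - optimalDuty b) * (x - (optimalDuty b)⁻¹) := by
  have hs := sq_sqrt (show 0 ≤ (b / 2) * (2 + b / 2) by positivity)
  rw [optimalDuty, one_div, inv_inv]
  set E := 1 + b / 2 + √((b / 2) * (2 + b / 2)) with hE
  have hE0 : E ≠ 0 := by positivity
  have hroot : E ^ 2 + 1 = (2 + b) * E := by rw [hE]; linear_combination hs
  field_simp
  linear_combination x * hroot

theorem throughput_maximizer_general (R a b : ℝ) (hR : 0 < R) (hb : 0 < b) :
    (1 / (1 + b / 2 + Real.sqrt ((b / 2) * (2 + b / 2)))) ∈ Ioo (0:ℝ) 1 ∧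
    ∀ Δ ∈ Ioo (0:ℝ) 1, Δ ≠ 1 / (1 + b / 2 + Real.sqrt ((b / 2) * (2 + b / 2))) →
      R * Δ * Real.exp (-a - b * Δ / (1 - Δ)) <
        R * (1 / (1 + b / 2 + Real.sqrt ((b / 2) * (2 + b / 2)))) *
          Real.exp (-a - b * (1 / (1 + b / 2 + Real.sqrt ((b / 2) * (2 + b / 2)))) /
            (1 - 1 / (1 + b / 2 + Real.sqrt ((b / 2) * (2 + b / 2))))) := by
  have hD : optimalDuty b ∈ Ioo 0 1 := optimalDuty_mem_Ioo hb
  have hE : 1 < (optimalDuty b)⁻¹ := one_lt_optimalDuty_inv hb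
  have hscale : ∀ x, 0 < R * exp (-a - b * x / (1 - x)) := fun x => by positivity
  refine ⟨hD, fun Δ hΔ hne => lt_of_hasDerivAt_pos_of_neg hD
    (fun x hx => hasDerivAt_mul_exp_sub_mul_div_one_sub R a b hx.2.ne) ?_ ?_ hΔ hne⟩
  · intro x hx
    rw [one_sub_sq_sub_mul_eq hb.le]
    have hx1 : x < 1 := hx.2.trans hD.2
    have hfac : 0 < (x - optimalDuty b) * (x - (optimalDuty b)⁻¹) :=
      mul_pos_of_neg_of_neg (by linarith [hx.2]) (by linarith)
    exact div_pos (mul_pos (hscale x) hfac) (pow_pos (sub_pos.mpr hx1) 2)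
  · intro x hx
    rw [one_sub_sq_sub_mul_eq hb.le]
    have hfac : (x - optimalDuty b) * (x - (optimalDuty b)⁻¹) < 0 :=
      mul_neg_of_pos_of_neg (by linarith [hx.1]) (by linarith [hx.2])
    exact div_neg_of_neg_of_pos (mul_neg_of_pos_of_neg (hscale x) hfac)
      (pow_pos (sub_pos.mpr hx.2) 2)

/-- The unique maximizer of θ(Δ) = R·Δ·exp(-a - b·Δ/(1-Δ)) on (0,1) is
    Δ* = 1/(1 + b/2 + √((b/2)(2 + b/2))). -/
theorem throughput_maximizer (R a b : ℝ) (hR : 0 < R) (ha : 0 ≤ a) (hb : 0 < b) :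
    (1 / (1 + b / 2 + Real.sqrt ((b / 2) * (2 + b / 2)))) ∈ Ioo (0:ℝ) 1 ∧
    ∀ Δ ∈ Ioo (0:ℝ) 1, Δ ≠ 1 / (1 + b / 2 + Real.sqrt ((b / 2) * (2 + b / 2))) →
      R * Δ * Real.exp (-a - b * Δ / (1 - Δ)) <
        R * (1 / (1 + b / 2 + Real.sqrt ((b / 2) * (2 + b / 2)))) *
          Real.exp (-a - b * (1 / (1 + b / 2 + Real.sqrt ((b / 2) * (2 + b / 2)))) /
            (1 - 1 / (1 + b / 2 + Real.sqrt ((b / 2) * (2 + b / 2))))) :=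
  throughput_maximizer_general R a b hR hb
end

section
/- Let λ, ρ, Q, μ > 0, T > 0, A > 0. Suppose the Laplace transform of the averaged interference Ī is given by L_Ī(z) = exp{−λρ·A·∫_{−∞}^{∞}(1 − μ/(μ + z·h(t)·Q)) dt} with h(t) = max(T−|t|,0)/T. Then L_Ī(z) = exp{−2λρAT·(1 + (μ/(Qz))·ln(μ/(μ + Qz)))} for all z > 0, and substituting ρ = Δ/((1−Δ)T) yields L_Ī(z) = exp{−(2λAΔ/(1−Δ))·(1 + (μ/(Qz))·ln(μ/(μ + Qz)))}. -/
/-!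
The integrand vanishes where the tent `h(t) = max(T - |t|, 0) / T` does, so by evenness and the
substitution `u = h(t)` the integral over `ℝ` is `2T ∫₀¹ (1 - μ / (μ + Q z u)) du`, and the
integrand `Qzu / (μ + Qzu)` has the elementary antiderivative `u - (μ / Qz) log (μ + Qzu)`.
-/

open MeasureTheory Real Set

theorem integral_comp_tent (g : ℝ → ℝ) (hg : g 0 = 0) {T : ℝ} (hT : 0 < T) :
    ∫ t, g (max (T - |t|) 0 / T) = 2 * T * ∫ u in (0:ℝ)..1, g u := by
  have hsupport : ∀ x ∈ Ioi 0 \ Ioc 0 T, g (max (T - x) 0 / T) = 0 := fun x hx => by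
    have hTx : T < x := by simp_all
    rw [max_eq_right (by linarith), zero_div, hg]
  have hslope : ∫ x in (0:ℝ)..T, g (max (T - x) 0 / T) = ∫ x in (0:ℝ)..T, g ((T - x) / T) :=
    intervalIntegral.integral_congr fun x hx => by
      rw [uIcc_of_le hT.le] at hx
      rw [max_eq_left (by linarith [hx.2])]
  rw [integral_comp_abs (f := fun x => g (max (T - x) 0 / T)),
    setIntegral_eq_of_subset_of_forall_sdiff_eq_zero measurableSet_Ioi Ioc_subset_Ioi_self hsupport,
    ← intervalIntegral.integral_of_le hT.le, hslope,
    intervalIntegral.integral_comp_sub_left (fun y => g (y / T)),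
    intervalIntegral.integral_comp_div _ hT.ne']
  simp [hT.ne', mul_assoc]

theorem integral_div_add_mul_of_pos {μ a : ℝ} (hμ : 0 < μ) (ha : 0 < a) :
    ∫ u in (0:ℝ)..1, μ / (μ + a * u) = -(μ / a * log (μ / (μ + a))) := by
  simp_rw [div_eq_mul_inv μ, intervalIntegral.integral_const_mul]
  rw [intervalIntegral.integral_comp_add_mul (fun x => x⁻¹) ha.ne', mul_zero, add_zero, mul_one,
    integral_inv_of_pos hμ (by positivity), smul_eq_mul, ← inv_div μ, log_inv]
  simp only [div_eq_mul_inv]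
  ring

theorem integral_one_sub_div_add_mul {μ a : ℝ} (hμ : 0 < μ) (ha : 0 < a) :
    ∫ u in (0:ℝ)..1, (1 - μ / (μ + a * u)) = 1 + μ / a * log (μ / (μ + a)) := by
  have hden : ∀ u ∈ uIcc (0:ℝ) 1, μ + a * u ≠ 0 := fun u hu => by
    rw [uIcc_of_le zero_le_one] at hu
    nlinarith [hu.1]
  have hint : IntervalIntegrable (fun u => μ / (μ + a * u)) volume 0 1 :=
    (continuousOn_const.div (by fun_prop) hden).intervalIntegrable
  rw [intervalIntegral.integral_sub intervalIntegrable_const hint,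
    integral_div_add_mul_of_pos hμ ha, intervalIntegral.integral_const, sub_zero, one_smul,
    sub_neg_eq_add]

theorem integral_one_sub_div_add_tent {Q μ T z : ℝ} (hQ : 0 < Q) (hμ : 0 < μ) (hT : 0 < T)
    (hz : 0 < z) :
    ∫ t : ℝ, (1 - μ / (μ + z * (max (T - |t|) 0 / T) * Q))
      = 2 * T * (1 + μ / (Q * z) * log (μ / (μ + Q * z))) := by
  have hreorder : (fun u => 1 - μ / (μ + z * u * Q)) = fun u => 1 - μ / (μ + Q * z * u) := by
    ext u
    ring_nf
  rw [integral_comp_tent (fun u => 1 - μ / (μ + z * u * Q)) (by simp [hμ.ne']) hT, hreorder,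
    integral_one_sub_div_add_mul hμ (by positivity)]

theorem poisson_rain_laplace_general (lam ρ Q μ T A Δ : ℝ) (L : ℝ → ℝ)
    (hQ : 0 < Q) (hμ : 0 < μ) (hT : 0 < T)
    (hL : ∀ z : ℝ, 0 < z → L z =
      Real.exp (-(lam * ρ * A *
        ∫ t : ℝ, (1 - μ / (μ + z * (max (T - |t|) 0 / T) * Q))))) :
    ∀ z : ℝ, 0 < z →
      L z = Real.exp (-(2 * lam * ρ * A * T *
              (1 + μ / (Q * z) * Real.log (μ / (μ + Q * z))))) ∧
      (ρ = Δ / ((1 - Δ) * T) →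
        L z = Real.exp (-((2 * lam * A * Δ / (1 - Δ)) *
                (1 + μ / (Q * z) * Real.log (μ / (μ + Q * z)))))) := by
  intro z hz
  have hclosed : L z = exp (-(2 * lam * ρ * A * T *
      (1 + μ / (Q * z) * log (μ / (μ + Q * z))))) := by
    rw [hL z hz, integral_one_sub_div_add_tent hQ hμ hT hz]
    ring_nf
  refine ⟨hclosed, fun hρ => ?_⟩
  have hρT : ρ * T = Δ / (1 - Δ) := by
    rw [hρ, ← div_div, div_mul_cancel₀ _ hT.ne']
  rw [hclosed, show 2 * lam * ρ * A * T = 2 * lam * A * (ρ * T) by ring, hρT]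
  ring_nf

/-- Proposition 1: if the Laplace transform of the averaged interference satisfies
    L(z) = exp{−λρA∫(1 − μ/(μ + z·h(t)·Q))dt} with h(t) = max(T−|t|,0)/T, then
    L(z) = exp{−2λρAT(1 + (μ/(Qz))ln(μ/(μ+Qz)))}; substituting ρ = Δ/((1−Δ)T) gives
    L(z) = exp{−(2λAΔ/(1−Δ))(1 + (μ/(Qz))ln(μ/(μ+Qz)))}. -/
theorem poisson_rain_laplace (lam ρ Q μ T A Δ : ℝ) (L : ℝ → ℝ)
    (hlam : 0 < lam) (hρ : 0 < ρ) (hQ : 0 < Q) (hμ : 0 < μ) (hT : 0 < T) (hA : 0 < A)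
    (hΔ : Δ ∈ Set.Ioo (0:ℝ) 1)
    (hL : ∀ z : ℝ, 0 < z → L z =
      Real.exp (-(lam * ρ * A *
        ∫ t : ℝ, (1 - μ / (μ + z * (max (T - |t|) 0 / T) * Q))))) :
    ∀ z : ℝ, 0 < z →
      L z = Real.exp (-(2 * lam * ρ * A * T *
              (1 + μ / (Q * z) * Real.log (μ / (μ + Q * z))))) ∧
      (ρ = Δ / ((1 - Δ) * T) →
        L z = Real.exp (-((2 * lam * A * Δ / (1 - Δ)) *
                (1 + μ / (Q * z) * Real.log (μ / (μ + Q * z)))))) :=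
  poisson_rain_laplace_general lam ρ Q μ T A Δ L hQ hμ hT hL
end
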